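/- arXiv:2101.07470 — 8 statements merged into one kernel-verified Lean document; each statement's English description precedes it below -/
import Mathlib

section
/- Let f, g, h : ℝ → ℂ be continuous functions and set ω₀ = (g − i·f)/2, ω₁ = (g + i·f)/2, μ = −i·h. Let u, v : ℝ → ℂ be differentiable functions satisfying the Riccati equation θ' = ω₀ + μ·θ + ω₁·θ² (i.e., u' = ω₀ + μ·u + ω₁·u² and v' = ω₀ + μ·v + ω₁·v²), and assume u(x) − v(x) ≠ 0 for all x. Define α = (1 − u·v)/(u − v), β = i·(1 + u·v)/(u − v), γ = (u + v)/(u − v). Then α, β, γ satisfy the orthogonal system α' = h·β − g·γ, β' = −h·α + f·γ, γ' = g·α − f·β, and moreover α² + β² + γ² = 1 identically. -/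
/-!
Since `u` and `v` solve the same Riccati equation, `(u - v)' = (u - v) (μ + ω₁ (u + v))`, so the
quotient rule turns the derivative of each of α, β, γ (a polynomial in `u, v` over `u - v`) into
another such quotient, and the orthogonal system becomes a polynomial identity in `u, v, f, g, h`
modulo `i² = -1`. Likewise `α² + β² + γ² = 1` is `(1 - uv)² - (1 + uv)² + (u + v)² = (u - v)²`.
-/

open Complex

noncomputable section

/-- The right-hand side `ω₀ + μ θ + ω₁ θ²` of the Riccati equation attached to `(f, g, h)`. -/
def riccati (f g h θ : ℂ) : ℂ :=
  (g - I * f) / 2 + (-I * h) * θ + ((g + I * f) / 2) * θ ^ 2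

def darbouxAlpha (u v : ℂ) : ℂ := (1 - u * v) / (u - v)

def darbouxBeta (u v : ℂ) : ℂ := I * (1 + u * v) / (u - v)

def darbouxGamma (u v : ℂ) : ℂ := (u + v) / (u - v)

theorem darbouxAlpha_sq_add_darbouxBeta_sq_add_darbouxGamma_sq {u v : ℂ} (huv : u - v ≠ 0) :
    darbouxAlpha u v ^ 2 + darbouxBeta u v ^ 2 + darbouxGamma u v ^ 2 = 1 := by
  unfold darbouxAlpha darbouxBeta darbouxGamma
  field_simp
  linear_combination (1 + u * v) ^ 2 * I_sq

section Derivatives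

variable {𝕜 : Type*} [NontriviallyNormedField 𝕜] [NormedAlgebra 𝕜 ℂ]
  {u v : 𝕜 → ℂ} {x : 𝕜} {f g h : ℂ}

theorem hasDerivAt_darbouxAlpha (hu : HasDerivAt u (riccati f g h (u x)) x)
    (hv : HasDerivAt v (riccati f g h (v x)) x) (huv : u x - v x ≠ 0) :
    HasDerivAt (fun t => darbouxAlpha (u t) (v t))
      (h * darbouxBeta (u x) (v x) - g * darbouxGamma (u x) (v x)) x := by
  refine (((hasDerivAt_const x 1).sub (hu.mul hv)).div (hu.sub hv) huv).congr_deriv ?_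
  simp only [riccati, darbouxBeta, darbouxGamma, Pi.sub_apply, Pi.mul_apply]
  field_simp
  ring

theorem hasDerivAt_darbouxBeta (hu : HasDerivAt u (riccati f g h (u x)) x)
    (hv : HasDerivAt v (riccati f g h (v x)) x) (huv : u x - v x ≠ 0) :
    HasDerivAt (fun t => darbouxBeta (u t) (v t))
      (-h * darbouxAlpha (u x) (v x) + f * darbouxGamma (u x) (v x)) x := by
  refine ((((hasDerivAt_const x 1).add (hu.mul hv)).const_mul I).div (hu.sub hv) huv).congr_deriv ?_
  simp only [riccati, darbouxAlpha, darbouxGamma, Pi.add_apply, Pi.sub_apply, Pi.mul_apply]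
  field_simp
  linear_combination 2 * (u x - v x) * (h * (1 - u x * v x) - f * (u x + v x)) * I_sq

theorem hasDerivAt_darbouxGamma (hu : HasDerivAt u (riccati f g h (u x)) x)
    (hv : HasDerivAt v (riccati f g h (v x)) x) (huv : u x - v x ≠ 0) :
    HasDerivAt (fun t => darbouxGamma (u t) (v t))
      (g * darbouxAlpha (u x) (v x) - f * darbouxBeta (u x) (v x)) x := by
  refine ((hu.add hv).div (hu.sub hv) huv).congr_deriv ?_
  simp only [riccati, darbouxAlpha, darbouxBeta, Pi.add_apply, Pi.sub_apply]
  field_simp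
  ring

end Derivatives

end

theorem darboux_orthogonal_forward_general
    (f g h u v α β γ : ℝ → ℂ)
    (hu : Differentiable ℝ u) (hv : Differentiable ℝ v)
    (hur : ∀ x, deriv u x = (g x - Complex.I * f x) / 2
        + (-Complex.I * h x) * u x + ((g x + Complex.I * f x) / 2) * u x ^ 2)
    (hvr : ∀ x, deriv v x = (g x - Complex.I * f x) / 2
        + (-Complex.I * h x) * v x + ((g x + Complex.I * f x) / 2) * v x ^ 2)
    (huv : ∀ x, u x - v x ≠ 0)
    (hα : ∀ x, α x = (1 - u x * v x) / (u x - v x))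
    (hβ : ∀ x, β x = Complex.I * (1 + u x * v x) / (u x - v x))
    (hγ : ∀ x, γ x = (u x + v x) / (u x - v x)) :
    (∀ x, deriv α x = h x * β x - g x * γ x) ∧
    (∀ x, deriv β x = -(h x) * α x + f x * γ x) ∧
    (∀ x, deriv γ x = g x * α x - f x * β x) ∧
    (∀ x, α x ^ 2 + β x ^ 2 + γ x ^ 2 = 1) := by
  have hU x : HasDerivAt u (riccati (f x) (g x) (h x) (u x)) x := (hu x).hasDerivAt.congr_deriv (hur x)
  have hV x : HasDerivAt v (riccati (f x) (g x) (h x) (v x)) x := (hv x).hasDerivAt.congr_deriv (hvr x)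
  obtain rfl : α = fun t => darbouxAlpha (u t) (v t) := funext hα
  obtain rfl : β = fun t => darbouxBeta (u t) (v t) := funext hβ
  obtain rfl : γ = fun t => darbouxGamma (u t) (v t) := funext hγ
  refine ⟨fun x => ?_, fun x => ?_, fun x => ?_, fun x => ?_⟩
  · exact (hasDerivAt_darbouxAlpha (hU x) (hV x) (huv x)).deriv
  · exact (hasDerivAt_darbouxBeta (hU x) (hV x) (huv x)).deriv
  · exact (hasDerivAt_darbouxGamma (hU x) (hV x) (huv x)).deriv
  · exact darbouxAlpha_sq_add_darbouxBeta_sq_add_darbouxGamma_sq (huv x)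

/-- Forward direction of Darboux's theorem on orthogonal systems (Theorem 2). -/
theorem darboux_orthogonal_forward
    (f g h u v α β γ : ℝ → ℂ)
    (hf : Continuous f) (hg : Continuous g) (hh : Continuous h)
    (hu : Differentiable ℝ u) (hv : Differentiable ℝ v)
    (hur : ∀ x, deriv u x = (g x - Complex.I * f x) / 2
        + (-Complex.I * h x) * u x + ((g x + Complex.I * f x) / 2) * u x ^ 2)
    (hvr : ∀ x, deriv v x = (g x - Complex.I * f x) / 2
        + (-Complex.I * h x) * v x + ((g x + Complex.I * f x) / 2) * v x ^ 2)
    (huv : ∀ x, u x - v x ≠ 0)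
    (hα : ∀ x, α x = (1 - u x * v x) / (u x - v x))
    (hβ : ∀ x, β x = Complex.I * (1 + u x * v x) / (u x - v x))
    (hγ : ∀ x, γ x = (u x + v x) / (u x - v x)) :
    (∀ x, deriv α x = h x * β x - g x * γ x) ∧
    (∀ x, deriv β x = -(h x) * α x + f x * γ x) ∧
    (∀ x, deriv γ x = g x * α x - f x * β x) ∧
    (∀ x, α x ^ 2 + β x ^ 2 + γ x ^ 2 = 1) :=
  darboux_orthogonal_forward_general f g h u v α β γ hu hv hur hvr huv hα hβ hγ
end

section
/- Let f, g, h : ℝ → ℂ be continuous and set ω₀ = (g − i·f)/2, ω₁ = (g + i·f)/2, μ = −i·h. Let α, β, γ : ℝ → ℂ be differentiable functions satisfying α' = h·β − g·γ, β' = −h·α + f·γ, γ' = g·α − f·β and α² + β² + γ² = 1, and assume 1 − γ(x) ≠ 0 and α(x) − i·β(x) ≠ 0 for all x. Then u := (α + i·β)/(1 − γ) and v := −(1 − γ)/(α − i·β) both satisfy the Riccati equation θ' = ω₀ + μ·θ + ω₁·θ², and the identities (α + i·β)/(1 − γ) = (1 + γ)/(α − i·β) and −(1 − γ)/(α − i·β)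 = −(α + i·β)/(1 + γ) hold (the latter wherever 1 + γ ≠ 0). -/
/-!
In the coordinates `p = α + iβ`, `q = α - iβ`, `γ` the orthogonal system becomes
`p' = μ p - 2 ω₀ γ`, `q' = -μ q - 2 ω₁ γ`, `γ' = ω₁ p + ω₀ q`, and the unit-norm condition becomes
`p q + γ² = 1`. For such a system the stereographic coordinate `p / (1 - γ)` solves the Riccati
equation with coefficients `(ω₀, μ, ω₁)`. The system is symmetric under `p ↔ q`, `μ ↦ -μ`,
`ω₀ ↔ ω₁`, so `q / (1 - γ)` solves the Riccati equation with coefficients `(ω₁, -μ, ω₀)`, and the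
inversion `θ ↦ -1/θ` carries that equation back to the one with `(ω₀, μ, ω₁)`; this gives `v`.
-/

open Complex

section Riccati

variable {𝕜 : Type*} [NontriviallyNormedField 𝕜] {𝕜' : Type*} [NontriviallyNormedField 𝕜']
  [NormedAlgebra 𝕜 𝕜'] {x : 𝕜} {a b c : 𝕜'}

theorem HasDerivAt.riccati_of_stereographic {p γ : 𝕜 → 𝕜'} {q : 𝕜'}
    (hp : HasDerivAt p (b * p x - 2 * a * γ x) x) (hγ : HasDerivAt γ (c * p x + a * q) x)
    (hnorm : p x * q + γ x ^ 2 = 1) (hγ1 : 1 - γ x ≠ 0) :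
    HasDerivAt (fun t => p t / (1 - γ t))
      (a + b * (p x / (1 - γ x)) + c * (p x / (1 - γ x)) ^ 2) x := by
  refine (hp.fun_div (hγ.const_sub 1) hγ1).congr_deriv ?_
  field_simp
  linear_combination a * hnorm

theorem HasDerivAt.riccati_neg_inv {θ : 𝕜 → 𝕜'}
    (hθ : HasDerivAt θ (a + b * θ x + c * θ x ^ 2) x) (hθx : θ x ≠ 0) :
    HasDerivAt (fun t => -(θ t)⁻¹) (c + -b * -(θ x)⁻¹ + a * (-(θ x)⁻¹) ^ 2) x := by
  refine (hθ.inv hθx).neg.congr_deriv ?_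
  field_simp
  ring

end Riccati

section OrthogonalSystem

variable {𝕜 : Type*} [NontriviallyNormedField 𝕜] [NormedAlgebra 𝕜 ℂ] {x : 𝕜}
  {α β γ : 𝕜 → ℂ} {f g h : ℂ}

theorem HasDerivAt.orthogonal_add_I_mul
    (hα : HasDerivAt α (h * β x - g * γ x) x) (hβ : HasDerivAt β (-h * α x + f * γ x) x) :
    HasDerivAt (fun t => α t + I * β t)
      (-I * h * (α x + I * β x) - 2 * ((g - I * f) / 2) * γ x) x := by
  refine (hα.add (hβ.const_mul I)).congr_deriv ?_
  linear_combination (h * β x) * I_sq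

theorem HasDerivAt.orthogonal_sub_I_mul
    (hα : HasDerivAt α (h * β x - g * γ x) x) (hβ : HasDerivAt β (-h * α x + f * γ x) x) :
    HasDerivAt (fun t => α t - I * β t)
      (-(-I * h) * (α x - I * β x) - 2 * ((g + I * f) / 2) * γ x) x := by
  refine (hα.sub (hβ.const_mul I)).congr_deriv ?_
  linear_combination (h * β x) * I_sq

end OrthogonalSystem

theorem mul_sub_mul_eq_add_I_mul_sub_I_mul (f g a b : ℂ) :
    g * a - f * b = (g + I * f) / 2 * (a + I * b) + (g - I * f) / 2 * (a - I * b) := by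
  linear_combination (-f * b) * I_sq

theorem add_I_mul_mul_sub_I_mul (a b : ℂ) : (a + I * b) * (a - I * b) = a ^ 2 + b ^ 2 := by
  linear_combination (-b ^ 2) * I_sq

section Stereographic

variable {K : Type*} [Field K] {p q γ : K}

theorem div_one_sub_eq_one_add_div (hnorm : p * q + γ ^ 2 = 1) (hγ1 : 1 - γ ≠ 0) (hq : q ≠ 0) :
    p / (1 - γ) = (1 + γ) / q := by
  rw [div_eq_div_iff hγ1 hq]
  linear_combination hnorm

theorem neg_one_sub_div_eq_neg_div_one_add (hnorm : p * q + γ ^ 2 = 1) (hq : q ≠ 0)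
    (hγ1 : 1 + γ ≠ 0) : -(1 - γ) / q = -(p / (1 + γ)) := by
  rw [neg_div, neg_inj, div_eq_div_iff hq hγ1]
  linear_combination -hnorm

end Stereographic

theorem darboux_orthogonal_converse_general
    (f g h α β γ u v : ℝ → ℂ)
    (hα : Differentiable ℝ α) (hβ : Differentiable ℝ β) (hγ : Differentiable ℝ γ)
    (h1 : ∀ x, deriv α x = h x * β x - g x * γ x)
    (h2 : ∀ x, deriv β x = -(h x) * α x + f x * γ x)
    (h3 : ∀ x, deriv γ x = g x * α x - f x * β x)
    (hnorm : ∀ x, α x ^ 2 + β x ^ 2 + γ x ^ 2 = 1)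
    (hγ1 : ∀ x, 1 - γ x ≠ 0) (hαβ : ∀ x, α x - Complex.I * β x ≠ 0)
    (hu : ∀ x, u x = (α x + Complex.I * β x) / (1 - γ x))
    (hv : ∀ x, v x = -(1 - γ x) / (α x - Complex.I * β x)) :
    (∀ x, deriv u x = (g x - Complex.I * f x) / 2
        + (-Complex.I * h x) * u x + ((g x + Complex.I * f x) / 2) * u x ^ 2) ∧
    (∀ x, deriv v x = (g x - Complex.I * f x) / 2
        + (-Complex.I * h x) * v x + ((g x + Complex.I * f x) / 2) * v x ^ 2) ∧
    (∀ x, (α x + Complex.I * β x) / (1 - γ x) = (1 + γ x) / (α x - Complex.I * β x)) ∧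
    (∀ x, 1 + γ x ≠ 0 →
      -(1 - γ x) / (α x - Complex.I * β x) = -((α x + Complex.I * β x) / (1 + γ x))) := by
  have hpq x : (α x + I * β x) * (α x - I * β x) + γ x ^ 2 = 1 := by
    rw [add_I_mul_mul_sub_I_mul, hnorm]
  have hα' x := h1 x ▸ (hα x).hasDerivAt
  have hβ' x := h2 x ▸ (hβ x).hasDerivAt
  have hγ' x :=
    mul_sub_mul_eq_add_I_mul_sub_I_mul (f x) (g x) (α x) (β x) ▸ h3 x ▸ (hγ x).hasDerivAt
  refine ⟨fun x => ?_, fun x => ?_, fun x => div_one_sub_eq_one_add_div (hpq x) (hγ1 x) (hαβ x),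
    fun x => neg_one_sub_div_eq_neg_div_one_add (hpq x) (hαβ x)⟩
  · rw [funext hu]
    exact ((hα' x).orthogonal_add_I_mul (hβ' x)).riccati_of_stereographic (hγ' x) (hpq x) (hγ1 x)
      |>.deriv
  · have hconj : HasDerivAt (fun t => (α t - I * β t) / (1 - γ t)) _ x :=
      ((hα' x).orthogonal_sub_I_mul (hβ' x)).riccati_of_stereographic
        ((hγ' x).congr_deriv (add_comm _ _)) (by rw [mul_comm]; exact hpq x) (hγ1 x)
    have hv' : v = fun t => -((α t - I * β t) / (1 - γ t))⁻¹ := by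
      ext t; rw [hv, inv_div, neg_div]
    rw [hv', (hconj.riccati_neg_inv (div_ne_zero (hαβ x) (hγ1 x))).deriv, neg_neg]

/-- Converse direction of Darboux's theorem on orthogonal systems (Theorem 2). -/
theorem darboux_orthogonal_converse
    (f g h α β γ u v : ℝ → ℂ)
    (hf : Continuous f) (hg : Continuous g) (hh : Continuous h)
    (hα : Differentiable ℝ α) (hβ : Differentiable ℝ β) (hγ : Differentiable ℝ γ)
    (h1 : ∀ x, deriv α x = h x * β x - g x * γ x)
    (h2 : ∀ x, deriv β x = -(h x) * α x + f x * γ x)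
    (h3 : ∀ x, deriv γ x = g x * α x - f x * β x)
    (hnorm : ∀ x, α x ^ 2 + β x ^ 2 + γ x ^ 2 = 1)
    (hγ1 : ∀ x, 1 - γ x ≠ 0) (hαβ : ∀ x, α x - Complex.I * β x ≠ 0)
    (hu : ∀ x, u x = (α x + Complex.I * β x) / (1 - γ x))
    (hv : ∀ x, v x = -(1 - γ x) / (α x - Complex.I * β x)) :
    (∀ x, deriv u x = (g x - Complex.I * f x) / 2
        + (-Complex.I * h x) * u x + ((g x + Complex.I * f x) / 2) * u x ^ 2) ∧
    (∀ x, deriv v x = (g x - Complex.I * f x) / 2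
        + (-Complex.I * h x) * v x + ((g x + Complex.I * f x) / 2) * v x ^ 2) ∧
    (∀ x, (α x + Complex.I * β x) / (1 - γ x) = (1 + γ x) / (α x - Complex.I * β x)) ∧
    (∀ x, 1 + γ x ≠ 0 →
      -(1 - γ x) / (α x - Complex.I * β x) = -((α x + Complex.I * β x) / (1 + γ x))) :=
  darboux_orthogonal_converse_general f g h α β γ u v hα hβ hγ h1 h2 h3 hnorm hγ1 hαβ hu hv
end

section
/- Let p, q, r, s, y₀, y : ℝ → ℂ be sufficiently differentiable, with s nonvanishing, s² = r, y₀ nonvanishing satisfying y₀'' + p·y₀' + q·y₀ = 0, and y satisfying y'' + p·y' + (q − m·r)·y = 0 for a constant m ∈ ℂ. Set θ₀ = y₀'/y₀, ρ = −θ₀ − p − r'/(2r), and let ỹ = (1/s)·(y' − θ₀·y) be the Darboux transform of y. Then the vector (ỹ, ỹ')ᵀ equals P_m·(y, y')ᵀ, where P_m = (1/s)·[[−θ₀, 1], [m·r − θ₀·ρ, ρ]], and moreover P_m factors as P_m = L_m·R with L_m = [[0, 1], [m·r, ρ]] and R = (1/s)·[[1, 0], [−θ₀, 1]]. -/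
/-!
Writing `ỹ = (y' - θ₀ y) / s`, the only derivatives to eliminate are `y''`, `θ₀'` and `s'`.
The equation for `y` removes `y''`; the equation for `y₀` is equivalent to the Riccati
equation `θ₀' = -θ₀² - p θ₀ - q` for its logarithmic derivative; and `s² = r` gives
`s' / s = r' / (2 r)`. What remains is a polynomial identity in `y, y', θ₀, p, s'/s`.
-/

open Matrix

theorem Matrix.smul_fin_two_eq_mul_smul {α : Type*} [CommRing α] (a ρ θ c : α) :
    c • !![-θ, 1; a - θ * ρ, ρ] = !![0, 1; a, ρ] * (c • !![1, 0; -θ, 1]) := by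
  rw [Matrix.mul_smul, mul_fin_two]
  congr <;> ring

section

variable {𝕜 : Type*} [NontriviallyNormedField 𝕜] [NormedAlgebra ℝ 𝕜] {x : ℝ}

theorem hasDerivAt_logDeriv {f : ℝ → 𝕜} (hf : DifferentiableAt ℝ f x)
    (hf' : DifferentiableAt ℝ (deriv f) x) (hf0 : f x ≠ 0) :
    HasDerivAt (logDeriv f) (deriv (deriv f) x / f x - logDeriv f x ^ 2) x := by
  refine (hf'.hasDerivAt.fun_div hf.hasDerivAt hf0).congr_deriv ?_
  rw [logDeriv_apply]
  field_simp

theorem hasDerivAt_logDeriv_of_ode {f p q : ℝ → 𝕜} (hf : DifferentiableAt ℝ f x)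
    (hf' : DifferentiableAt ℝ (deriv f) x) (hf0 : f x ≠ 0)
    (hode : deriv (deriv f) x + p x * deriv f x + q x * f x = 0) :
    HasDerivAt (logDeriv f) (-logDeriv f x ^ 2 - p x * logDeriv f x - q x) x := by
  convert hasDerivAt_logDeriv hf hf' hf0 using 1
  rw [logDeriv_apply]
  field_simp
  linear_combination -f x * hode

theorem logDeriv_eq_of_sq_eq {s r : ℝ → 𝕜} (hs : DifferentiableAt ℝ s x) (hs0 : s x ≠ 0)
    (hsr : ∀ t, s t ^ 2 = r t) :
    logDeriv r x = 2 * logDeriv s x := by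
  have hr : r = fun t => s t ^ 2 := funext fun t => (hsr t).symm
  rw [hr, logDeriv_apply, logDeriv_apply, (hs.hasDerivAt.fun_pow 2).deriv]
  field_simp
  push_cast
  ring

theorem hasDerivAt_one_div_mul_deriv_sub_mul {y θ s : ℝ → 𝕜} {y'' θ' s' : 𝕜}
    (hy : DifferentiableAt ℝ y x) (hy' : HasDerivAt (deriv y) y'' x)
    (hθ : HasDerivAt θ θ' x) (hs : HasDerivAt s s' x) (hs0 : s x ≠ 0) :
    HasDerivAt (fun t => 1 / s t * (deriv y t - θ t * y t))
      (1 / s x * (y'' - θ' * y x - θ x * deriv y x - s' / s x * (deriv y x - θ x * y x))) x := by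
  refine (((hasDerivAt_const x (1 : 𝕜)).fun_div hs hs0).fun_mul
    (hy'.fun_sub (hθ.fun_mul hy.hasDerivAt))).congr_deriv ?_
  field_simp
  ring

end

theorem darboux_gauge_factorization_general
    (p q r s y₀ y θ₀ ρ yt : ℝ → ℂ) (m : ℂ)
    (hy₀ : Differentiable ℝ y₀) (hy₀' : Differentiable ℝ (deriv y₀))
    (hy : Differentiable ℝ y) (hy' : Differentiable ℝ (deriv y))
    (hs : Differentiable ℝ s)
    (hs0 : ∀ x, s x ≠ 0) (hsr : ∀ x, (s x) ^ 2 = r x)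
    (hy₀0 : ∀ x, y₀ x ≠ 0)
    (hode0 : ∀ x, deriv (deriv y₀) x + p x * deriv y₀ x + q x * y₀ x = 0)
    (hodem : ∀ x, deriv (deriv y) x + p x * deriv y x + (q x - m * r x) * y x = 0)
    (hθ₀ : ∀ x, θ₀ x = deriv y₀ x / y₀ x)
    (hρ : ∀ x, ρ x = -θ₀ x - p x - deriv r x / (2 * r x))
    (hyt : ∀ x, yt x = (1 / s x) * (deriv y x - θ₀ x * y x))
    (P L R : ℝ → Matrix (Fin 2) (Fin 2) ℂ)
    (hP : ∀ x, P x = (1 / s x) • !![-θ₀ x, 1; m * r x - θ₀ x * ρ x, ρ x])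
    (hL : ∀ x, L x = !![0, 1; m * r x, ρ x])
    (hR : ∀ x, R x = (1 / s x) • !![1, 0; -θ₀ x, 1]) :
    (∀ x, ![yt x, deriv yt x] = (P x).mulVec ![y x, deriv y x]) ∧
    (∀ x, P x = L x * R x) := by
  refine ⟨fun x => ?_, fun x => by rw [hP, hL, hR, Matrix.smul_fin_two_eq_mul_smul]⟩
  have hθ₀_eq : θ₀ = logDeriv y₀ := funext hθ₀
  have hρ_eq : ρ x = -θ₀ x - p x - deriv s x / s x := by
    rw [hρ, div_mul_eq_div_div_swap, ← logDeriv_apply, logDeriv_eq_of_sq_eq (hs x) (hs0 x) hsr,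
      ← logDeriv_apply]
    ring
  have hriccati := hasDerivAt_logDeriv_of_ode (hy₀ x) (hy₀' x) (hy₀0 x) (hode0 x)
  rw [← hθ₀_eq] at hriccati
  have hdyt := (hasDerivAt_one_div_mul_deriv_sub_mul (hy x) (hy' x).hasDerivAt hriccati
    (hs x).hasDerivAt (hs0 x)).deriv
  rw [← funext hyt] at hdyt
  rw [hP, mulVec_fin_two]
  refine vec2_eq ?_ ?_
  · simp only [hyt, one_div, Matrix.smul_apply, of_apply, cons_val', cons_val_zero, cons_val_one,
      cons_val_fin_one, smul_eq_mul]
    ring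
  · simp only [hdyt, hρ_eq, one_div, Matrix.smul_apply, of_apply, cons_val', cons_val_zero, cons_val_one,
      cons_val_fin_one, smul_eq_mul]
    linear_combination (1 / s x) * hodem x

/-- Proposition 1: Darboux transformation as a gauge transformation, with the
matrix factorization P_m = L_m · R. -/
theorem darboux_gauge_factorization
    (p q r s y₀ y θ₀ ρ yt : ℝ → ℂ) (m : ℂ)
    (hp : Differentiable ℝ p) (hq : Differentiable ℝ q)
    (hr : Differentiable ℝ r) (hr' : Differentiable ℝ (deriv r))
    (hy₀ : Differentiable ℝ y₀) (hy₀' : Differentiable ℝ (deriv y₀))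
    (hy : Differentiable ℝ y) (hy' : Differentiable ℝ (deriv y))
    (hs : Differentiable ℝ s)
    (hs0 : ∀ x, s x ≠ 0) (hsr : ∀ x, (s x) ^ 2 = r x)
    (hy₀0 : ∀ x, y₀ x ≠ 0)
    (hode0 : ∀ x, deriv (deriv y₀) x + p x * deriv y₀ x + q x * y₀ x = 0)
    (hodem : ∀ x, deriv (deriv y) x + p x * deriv y x + (q x - m * r x) * y x = 0)
    (hθ₀ : ∀ x, θ₀ x = deriv y₀ x / y₀ x)
    (hρ : ∀ x, ρ x = -θ₀ x - p x - deriv r x / (2 * r x))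
    (hyt : ∀ x, yt x = (1 / s x) * (deriv y x - θ₀ x * y x))
    (P L R : ℝ → Matrix (Fin 2) (Fin 2) ℂ)
    (hP : ∀ x, P x = (1 / s x) • !![-θ₀ x, 1; m * r x - θ₀ x * ρ x, ρ x])
    (hL : ∀ x, L x = !![0, 1; m * r x, ρ x])
    (hR : ∀ x, R x = (1 / s x) • !![1, 0; -θ₀ x, 1]) :
    (∀ x, ![yt x, deriv yt x] = (P x).mulVec ![y x, deriv y x]) ∧
    (∀ x, P x = L x * R x) :=
  darboux_gauge_factorization_general p q r s y₀ y θ₀ ρ yt m hy₀ hy₀' hy hy' hs hs0 hsr hy₀0 hode0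
    hodem hθ₀ hρ hyt P L R hP hL hR
end

section
/- Under the hypotheses of Darboux's transformation theorem — p, q, r, s, y₀, y : ℝ → ℂ sufficiently differentiable, s nonvanishing with s² = r, y₀ nonvanishing with y₀'' + p·y₀' + q·y₀ = 0, and y'' + p·y' + (q − m·r)·y = 0 for a constant m ∈ ℂ — set θ₀ = y₀'/y₀, ρ = −θ₀ − p − r'/(2r), and ỹ = (1/s)·(y' − θ₀·y). Then ỹ' − ρ·ỹ = m·s·y. -/
/-!
The logarithmic derivative θ₀ = y₀'/y₀ of a solution of y'' + p y' + q y = 0 solves the Riccati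
equation θ₀' = -θ₀² - p θ₀ - q. Feeding this into u = y' - θ₀ y, for y a solution of the perturbed
equation, gives the first-order equation u' + (θ₀ + p) u = m r y, in which θ₀ and q cancel. Dividing
by s = √r adds s'/s = r'/(2r) to the coefficient and turns m r y into m s y.
-/

variable {𝕜 𝕜' : Type*} [NontriviallyNormedField 𝕜] [NontriviallyNormedField 𝕜']
  [NormedAlgebra 𝕜 𝕜']

theorem hasDerivAt_logDeriv_of_linear_ode {y₀ p q : 𝕜 → 𝕜'} {x : 𝕜}
    (hy₀ : DifferentiableAt 𝕜 y₀ x) (hy₀' : DifferentiableAt 𝕜 (deriv y₀) x) (hy₀0 : y₀ x ≠ 0)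
    (hode : deriv (deriv y₀) x + p x * deriv y₀ x + q x * y₀ x = 0) :
    HasDerivAt (logDeriv y₀) (-logDeriv y₀ x ^ 2 - p x * logDeriv y₀ x - q x) x := by
  refine (hy₀'.hasDerivAt.div hy₀.hasDerivAt hy₀0).congr_deriv ?_
  rw [logDeriv_apply]
  field_simp
  linear_combination y₀ x * hode

theorem hasDerivAt_deriv_sub_mul_of_riccati {θ p q r y : 𝕜 → 𝕜'} {m : 𝕜'} {x : 𝕜}
    (hθ : HasDerivAt θ (-θ x ^ 2 - p x * θ x - q x) x)
    (hy : DifferentiableAt 𝕜 y x) (hy' : DifferentiableAt 𝕜 (deriv y) x)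
    (hode : deriv (deriv y) x + p x * deriv y x + (q x - m * r x) * y x = 0) :
    HasDerivAt (fun x ↦ deriv y x - θ x * y x)
      (-(θ x + p x) * (deriv y x - θ x * y x) + m * r x * y x) x :=
  (hy'.hasDerivAt.sub (hθ.mul hy.hasDerivAt)).congr_deriv (by linear_combination hode)

theorem HasDerivAt.div_of_linear_deriv {u s : 𝕜 → 𝕜'} {a b : 𝕜'} {x : 𝕜}
    (hu : HasDerivAt u (-a * u x + b) x) (hs : DifferentiableAt 𝕜 s x) (hs0 : s x ≠ 0) :
    HasDerivAt (fun x ↦ u x / s x) (-(a + logDeriv s x) * (u x / s x) + b / s x) x := by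
  refine (hu.div hs.hasDerivAt hs0).congr_deriv ?_
  rw [logDeriv_apply]
  field_simp
  ring

theorem darboux_first_order_link_general
    (p q r s y₀ y θ₀ ρ yt : ℝ → ℂ) (m : ℂ)
    (hy₀ : Differentiable ℝ y₀) (hy₀' : Differentiable ℝ (deriv y₀))
    (hy : Differentiable ℝ y) (hy' : Differentiable ℝ (deriv y))
    (hs : Differentiable ℝ s)
    (hs0 : ∀ x, s x ≠ 0) (hsr : ∀ x, (s x) ^ 2 = r x)
    (hy₀0 : ∀ x, y₀ x ≠ 0)
    (hode0 : ∀ x, deriv (deriv y₀) x + p x * deriv y₀ x + q x * y₀ x = 0)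
    (hodem : ∀ x, deriv (deriv y) x + p x * deriv y x + (q x - m * r x) * y x = 0)
    (hθ₀ : ∀ x, θ₀ x = deriv y₀ x / y₀ x)
    (hρ : ∀ x, ρ x = -θ₀ x - p x - deriv r x / (2 * r x))
    (hyt : ∀ x, yt x = (1 / s x) * (deriv y x - θ₀ x * y x)) :
    ∀ x, deriv yt x - ρ x * yt x = m * s x * y x := by
  intro x
  obtain rfl : θ₀ = logDeriv y₀ := funext hθ₀
  obtain rfl : yt = fun x ↦ (deriv y x - logDeriv y₀ x * y x) / s x :=
    funext fun x ↦ by rw [hyt, one_div_mul_eq_div]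
  have hriccati := hasDerivAt_logDeriv_of_linear_ode (hy₀ x) (hy₀' x) (hy₀0 x) (hode0 x)
  have hyt' := (hasDerivAt_deriv_sub_mul_of_riccati hriccati (hy x) (hy' x)
    (hodem x)).div_of_linear_deriv (hs x) (hs0 x)
  have hlogDeriv_r : deriv r x / (2 * r x) = logDeriv s x := by
    obtain rfl : r = (s · ^ 2) := funext fun x ↦ (hsr x).symm
    rw [div_mul_eq_div_div_swap, ← logDeriv_apply, logDeriv_fun_pow (hs x)]
    push_cast
    ring
  rw [hyt'.deriv, hρ, hlogDeriv_r, ← hsr x]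
  field_simp [hs0 x]
  ring

/-- First-order link between a solution and its Darboux transform:
ỹ' − ρ·ỹ = m·√r·y (Remark after Proposition 1). -/
theorem darboux_first_order_link
    (p q r s y₀ y θ₀ ρ yt : ℝ → ℂ) (m : ℂ)
    (hp : Differentiable ℝ p) (hq : Differentiable ℝ q)
    (hr : Differentiable ℝ r) (hr' : Differentiable ℝ (deriv r))
    (hy₀ : Differentiable ℝ y₀) (hy₀' : Differentiable ℝ (deriv y₀))
    (hy : Differentiable ℝ y) (hy' : Differentiable ℝ (deriv y))
    (hs : Differentiable ℝ s)
    (hs0 : ∀ x, s x ≠ 0) (hsr : ∀ x, (s x) ^ 2 = r x)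
    (hy₀0 : ∀ x, y₀ x ≠ 0)
    (hode0 : ∀ x, deriv (deriv y₀) x + p x * deriv y₀ x + q x * y₀ x = 0)
    (hodem : ∀ x, deriv (deriv y) x + p x * deriv y x + (q x - m * r x) * y x = 0)
    (hθ₀ : ∀ x, θ₀ x = deriv y₀ x / y₀ x)
    (hρ : ∀ x, ρ x = -θ₀ x - p x - deriv r x / (2 * r x))
    (hyt : ∀ x, yt x = (1 / s x) * (deriv y x - θ₀ x * y x)) :
    ∀ x, deriv yt x - ρ x * yt x = m * s x * y x :=
  darboux_first_order_link_general p q r s y₀ y θ₀ ρ yt m hy₀ hy₀' hy hy' hs hs0 hsr hy₀0 hode0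
    hodem hθ₀ hρ hyt
end

section
/- Let f, g, h be elements of a commutative ℂ-algebra (e.g., complex-valued functions). Let Q be the 3×3 matrix with rows (1, 0, −1), (i, 0, i), (0, −1, 0), and let M be the 3×3 matrix with rows (i·h, (g + i·f)/2, 0), (−(g − i·f), 0, g + i·f), (0, −(g − i·f)/2, −i·h) (this is 𝔰y𝔪²(C) for C = (1/2)·[[i·h, g + i·f], [−(g − i·f), −i·h]]). Then Q·M·Q⁻¹ equals the skew-symmetric matrix with rows (0, h, −g), (−h, 0, f), (g, −f, 0). Consequently, if Y : ℝ → ℂ³ is differentiable and satisfies Y' = M·Y (with f, g, h continuous functions), then Z := Q·Y satisfies the orthogonal system Z' = Z × Ω with Ω = (f, g, h)ᵀ. -/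
/-!
Writing `(u, v)' = C (u, v)` for `C` traceless, the quadratic monomials `(u², 2uv, v²)` solve
`Y' = Sym²(C) Y`. The constant matrix `Q` is an intertwiner `Q Sym²(C) = [Ω]ₓ Q`, where `[Ω]ₓ` is
the skew matrix of `Z ↦ Z × Ω`; since `Q` is constant, `Z = QY` then solves `Z' = Z × Ω`.
-/

open Matrix

section Gauge

variable {K : Type*} [Field K]

/-- The symmetric square of `C` in the basis `(u², 2uv, v²)` of quadratic forms. -/
def Matrix.sym2 (C : Matrix (Fin 2) (Fin 2) K) : Matrix (Fin 3) (Fin 3) K :=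
  !![2 * C 0 0, C 0 1, 0; 2 * C 1 0, C 0 0 + C 1 1, 2 * C 0 1; 0, C 1 0, 2 * C 1 1]

def tracelessOfAngularVelocity (i f g h : K) : Matrix (Fin 2) (Fin 2) K :=
  (1 / 2 : K) • !![i * h, g + i * f; -(g - i * f), -i * h]

def crossMatrix (ω : Fin 3 → K) : Matrix (Fin 3) (Fin 3) K :=
  !![0, ω 2, -ω 1; -ω 2, 0, ω 0; ω 1, -ω 0, 0]

theorem crossMatrix_mulVec (ω z : Fin 3 → K) : crossMatrix ω *ᵥ z = z ⨯₃ ω := by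
  ext k
  fin_cases k <;> simp [crossMatrix, cross_apply, mulVec, dotProduct, Fin.sum_univ_three] <;> ring

def gaugeMatrix (i : K) : Matrix (Fin 3) (Fin 3) K :=
  !![1, 0, -1; i, 0, i; 0, -1, 0]

theorem det_gaugeMatrix (i : K) : (gaugeMatrix i).det = 2 * i := by
  simp [gaugeMatrix, det_fin_three]
  ring

theorem isUnit_det_gaugeMatrix {i : K} (h2 : (2 : K) ≠ 0) (hi : i ≠ 0) :
    IsUnit (gaugeMatrix i).det := by
  simpa [det_gaugeMatrix] using mul_ne_zero h2 hi

variable {i : K}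

theorem gaugeMatrix_mul_sym2 (hi : i * i = -1) (h2 : (2 : K) ≠ 0) (f g h : K) :
    gaugeMatrix i * (tracelessOfAngularVelocity i f g h).sym2 =
      crossMatrix ![f, g, h] * gaugeMatrix i := by
  ext r c
  fin_cases r <;> fin_cases c <;>
    simp [gaugeMatrix, Matrix.sym2, tracelessOfAngularVelocity, crossMatrix, mul_apply,
      Fin.sum_univ_three] <;> grind

theorem gaugeMatrix_mul_sym2_mul_inv (hi : i * i = -1) (h2 : (2 : K) ≠ 0) (f g h : K) :
    gaugeMatrix i * (tracelessOfAngularVelocity i f g h).sym2 * (gaugeMatrix i)⁻¹ =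
      crossMatrix ![f, g, h] := by
  have hi0 : i ≠ 0 := by rintro rfl; simp at hi
  rw [gaugeMatrix_mul_sym2 hi h2, mul_nonsing_inv_cancel_right _ _ (isUnit_det_gaugeMatrix h2 hi0)]

theorem sym2_tracelessOfAngularVelocity (h2 : (2 : K) ≠ 0) (f g h : K) :
    (tracelessOfAngularVelocity i f g h).sym2 =
      !![i * h, (g + i * f) / 2, 0; -(g - i * f), 0, g + i * f; 0, -(g - i * f) / 2, -i * h] := by
  ext r c
  fin_cases r <;> fin_cases c <;> simp [Matrix.sym2, tracelessOfAngularVelocity] <;> grind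

end Gauge

section Derivative

variable {𝕜 𝔸 : Type*} [NontriviallyNormedField 𝕜] [NormedRing 𝔸] [NormedAlgebra 𝕜 𝔸]
  {m n : Type*} [Fintype n] {Y : 𝕜 → n → 𝔸} {x : 𝕜}

theorem hasDerivAt_const_mulVec (P : Matrix m n 𝔸) {Y' : n → 𝔸}
    (hY : ∀ j, HasDerivAt (fun t => Y t j) (Y' j) x) (k : m) :
    HasDerivAt (fun t => (P *ᵥ Y t) k) ((P *ᵥ Y') k) x := by
  simp only [mulVec, dotProduct]
  exact HasDerivAt.fun_sum fun j _ => (hY j).const_mul (P k j)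

theorem hasDerivAt_gauge_transform [Fintype m] {P : Matrix m n 𝔸} {M : Matrix n n 𝔸}
    {A : Matrix m m 𝔸} (hPMA : P * M = A * P)
    (hY : ∀ j, HasDerivAt (fun t => Y t j) ((M *ᵥ Y x) j) x) (k : m) :
    HasDerivAt (fun t => (P *ᵥ Y t) k) ((A *ᵥ (P *ᵥ Y x)) k) x := by
  rw [mulVec_mulVec, ← hPMA, ← mulVec_mulVec]
  exact hasDerivAt_const_mulVec P hY k

end Derivative

theorem gauge_sym2_to_so3_general
    (f g h : ℝ → ℂ)
    (Q : Matrix (Fin 3) (Fin 3) ℂ)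
    (hQ : Q = !![1, 0, -1; Complex.I, 0, Complex.I; 0, -1, 0])
    (M : ℝ → Matrix (Fin 3) (Fin 3) ℂ)
    (hM : ∀ x, M x = !![Complex.I * h x, (g x + Complex.I * f x) / 2, 0;
        -(g x - Complex.I * f x), 0, g x + Complex.I * f x;
        0, -(g x - Complex.I * f x) / 2, -Complex.I * h x]) :
    (∀ x, Q * M x * Q⁻¹ = !![0, h x, -(g x); -(h x), 0, f x; g x, -(f x), 0]) ∧
    (∀ Y : ℝ → Fin 3 → ℂ, (∀ i, Differentiable ℝ (fun t => Y t i)) →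
      (∀ x i, deriv (fun t => Y t i) x = ((M x).mulVec (Y x)) i) →
      ∀ x, deriv (fun t => (Q.mulVec (Y t)) 0) x
              = (Q.mulVec (Y x)) 1 * h x - (Q.mulVec (Y x)) 2 * g x ∧
           deriv (fun t => (Q.mulVec (Y t)) 1) x
              = (Q.mulVec (Y x)) 2 * f x - (Q.mulVec (Y x)) 0 * h x ∧
           deriv (fun t => (Q.mulVec (Y t)) 2) x
              = (Q.mulVec (Y x)) 0 * g x - (Q.mulVec (Y x)) 1 * f x) := by
  obtain rfl : Q = gaugeMatrix Complex.I := hQ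
  obtain rfl : M = fun x => (tracelessOfAngularVelocity Complex.I (f x) (g x) (h x)).sym2 :=
    funext fun x => (hM x).trans (sym2_tracelessOfAngularVelocity two_ne_zero _ _ _).symm
  refine ⟨fun x => gaugeMatrix_mul_sym2_mul_inv Complex.I_mul_I two_ne_zero _ _ _,
    fun Y hY hY' x => ?_⟩
  have hZ := hasDerivAt_gauge_transform
    (gaugeMatrix_mul_sym2 Complex.I_mul_I two_ne_zero (f x) (g x) (h x))
    (fun j => hY' x j ▸ (hY j x).hasDerivAt)
  simp only [crossMatrix_mulVec, cross_apply] at hZ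
  exact ⟨(hZ 0).deriv, (hZ 1).deriv, (hZ 2).deriv⟩

/-- Lemma (gaugemat): the constant gauge Q identifies the symmetric square of a
2×2 traceless system with an 𝔰𝔬(3) system Z' = Z × Ω. -/
theorem gauge_sym2_to_so3
    (f g h : ℝ → ℂ) (hf : Continuous f) (hg : Continuous g) (hh : Continuous h)
    (Q : Matrix (Fin 3) (Fin 3) ℂ)
    (hQ : Q = !![1, 0, -1; Complex.I, 0, Complex.I; 0, -1, 0])
    (M : ℝ → Matrix (Fin 3) (Fin 3) ℂ)
    (hM : ∀ x, M x = !![Complex.I * h x, (g x + Complex.I * f x) / 2, 0;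
        -(g x - Complex.I * f x), 0, g x + Complex.I * f x;
        0, -(g x - Complex.I * f x) / 2, -Complex.I * h x]) :
    (∀ x, Q * M x * Q⁻¹ = !![0, h x, -(g x); -(h x), 0, f x; g x, -(f x), 0]) ∧
    (∀ Y : ℝ → Fin 3 → ℂ, (∀ i, Differentiable ℝ (fun t => Y t i)) →
      (∀ x i, deriv (fun t => Y t i) x = ((M x).mulVec (Y x)) i) →
      ∀ x, deriv (fun t => (Q.mulVec (Y t)) 0) x
              = (Q.mulVec (Y x)) 1 * h x - (Q.mulVec (Y x)) 2 * g x ∧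
           deriv (fun t => (Q.mulVec (Y t)) 1) x
              = (Q.mulVec (Y x)) 2 * f x - (Q.mulVec (Y x)) 0 * h x ∧
           deriv (fun t => (Q.mulVec (Y t)) 2) x
              = (Q.mulVec (Y x)) 0 * g x - (Q.mulVec (Y x)) 1 * f x) :=
  gauge_sym2_to_so3_general f g h Q hQ M hM
end

section
/- (a) Let f, g, h : ℝ → ℂ be continuous and let α, β, γ : ℝ → ℂ be differentiable with α' = h·β − g·γ, β' = −h·α + f·γ, γ' = g·α − f·β. Then the function α² + β² + γ² has derivative identically zero. (b) Let w be differentiable and nonvanishing, p = w'/w, q continuous, and let (z₁, z₂, z₃) : ℝ → ℂ³ be differentiable with z₁' = z₂, z₂' = −2q·z₁ − p·z₂ + 2z₃, z₃' = −q·z₂ − 2p·z₃. Then the function w²·(4·z₁·z₃ − z₂²) has derivative identically zero. -/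
/-!
For (a), `(α² + β² + γ²)' = 2 Z · Z' = 2 Z · (Z × Ω) = 0`. For (b), along the second symmetric
power system the discriminant `4 z₁ z₃ - z₂²` satisfies `D' = -2 p D`, while `(w²)' = 2 p w²`
because `p` is the logarithmic derivative of `w`; the two rates cancel in the product `w² D`.
-/

section FirstIntegrals

variable {𝕜 𝔸 : Type*} [NontriviallyNormedField 𝕜] [NormedCommRing 𝔸] [NormedAlgebra 𝕜 𝔸]
  {x : 𝕜}

theorem HasDerivAt.fun_sq {f : 𝕜 → 𝔸} {f' : 𝔸} (hf : HasDerivAt f f' x) :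
    HasDerivAt (fun t => f t ^ 2) (2 * f x * f') x := by
  simpa using hf.fun_pow 2

theorem hasDerivAt_sq_add_sq_add_sq_of_orthogonal {α β γ : 𝕜 → 𝔸} {f g h : 𝔸}
    (hα : HasDerivAt α (h * β x - g * γ x) x) (hβ : HasDerivAt β (-h * α x + f * γ x) x)
    (hγ : HasDerivAt γ (g * α x - f * β x) x) :
    HasDerivAt (fun t => α t ^ 2 + β t ^ 2 + γ t ^ 2) 0 x :=
  ((hα.fun_sq.fun_add hβ.fun_sq).fun_add hγ.fun_sq).congr_deriv (by ring)

theorem hasDerivAt_sym2_discriminant {z₁ z₂ z₃ : 𝕜 → 𝔸} {p q : 𝔸}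
    (h₁ : HasDerivAt z₁ (z₂ x) x) (h₂ : HasDerivAt z₂ (-2 * q * z₁ x - p * z₂ x + 2 * z₃ x) x)
    (h₃ : HasDerivAt z₃ (-q * z₂ x - 2 * p * z₃ x) x) :
    HasDerivAt (fun t => 4 * z₁ t * z₃ t - z₂ t ^ 2)
      (-(2 * p * (4 * z₁ x * z₃ x - z₂ x ^ 2))) x :=
  (((h₁.const_mul 4).fun_mul h₃).fun_sub h₂.fun_sq).congr_deriv (by ring)

theorem hasDerivAt_mul_zero_of_opposite_rates {u v : 𝕜 → 𝔸} {a : 𝔸}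
    (hu : HasDerivAt u (a * u x) x) (hv : HasDerivAt v (-(a * v x)) x) :
    HasDerivAt (fun t => u t * v t) 0 x :=
  (hu.fun_mul hv).congr_deriv (by ring)

end FirstIntegrals

/-- Corollary (propso0): first integrals of the orthogonal system and of the
second symmetric power system. -/
theorem first_integrals_orthogonal_and_sym2 :
    (∀ f g h α β γ : ℝ → ℂ,
      Continuous f → Continuous g → Continuous h →
      Differentiable ℝ α → Differentiable ℝ β → Differentiable ℝ γ →
      (∀ x, deriv α x = h x * β x - g x * γ x) →
      (∀ x, deriv β x = -(h x) * α x + f x * γ x) →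
      (∀ x, deriv γ x = g x * α x - f x * β x) →
      ∀ x, deriv (fun t => α t ^ 2 + β t ^ 2 + γ t ^ 2) x = 0) ∧
    (∀ w p q z₁ z₂ z₃ : ℝ → ℂ,
      Differentiable ℝ w → (∀ x, w x ≠ 0) → (∀ x, p x = deriv w x / w x) →
      Continuous q →
      Differentiable ℝ z₁ → Differentiable ℝ z₂ → Differentiable ℝ z₃ →
      (∀ x, deriv z₁ x = z₂ x) →
      (∀ x, deriv z₂ x = -2 * q x * z₁ x - p x * z₂ x + 2 * z₃ x) →
      (∀ x, deriv z₃ x = -(q x) * z₂ x - 2 * p x * z₃ x) →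
      ∀ x, deriv (fun t => w t ^ 2 * (4 * z₁ t * z₃ t - z₂ t ^ 2)) x = 0) := by
  constructor
  · intro f g h α β γ _ _ _ hα hβ hγ hα' hβ' hγ' x
    exact (hasDerivAt_sq_add_sq_add_sq_of_orthogonal ((hα x).hasDerivAt.congr_deriv (hα' x))
      ((hβ x).hasDerivAt.congr_deriv (hβ' x)) ((hγ x).hasDerivAt.congr_deriv (hγ' x))).deriv
  · intro w p q z₁ z₂ z₃ hw hw₀ hp _ h₁ h₂ h₃ h₁' h₂' h₃' x
    have hw' : HasDerivAt w (p x * w x) x :=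
      (hw x).hasDerivAt.congr_deriv (by rw [hp x, div_mul_cancel₀ _ (hw₀ x)])
    have hw_sq : HasDerivAt (fun t => w t ^ 2) (2 * p x * w x ^ 2) x :=
      hw'.fun_sq.congr_deriv (by ring)
    have hD := hasDerivAt_sym2_discriminant ((h₁ x).hasDerivAt.congr_deriv (h₁' x))
      ((h₂ x).hasDerivAt.congr_deriv (h₂' x)) ((h₃ x).hasDerivAt.congr_deriv (h₃' x))
    exact (hasDerivAt_mul_zero_of_opposite_rates hw_sq hD).deriv
end

section
/- Let w, q : ℝ → ℂ with w differentiable and nonvanishing, q continuous, and p = w'/w. Let y_a, y_b : ℝ → ℂ be twice differentiable solutions of y'' + p·y' + q·y = 0. Define Z₁ = (y_a·y_b + w²·y_a'·y_b', i·w·(y_a·y_b' + y_a'·y_b), i·(y_a·y_b − w²·y_a'·y_b')). Then Z₁ satisfies Z₁' = −Ω̂₀·Z₁, where Ω̂₀ is the 3×3 matrix with rows (0, i·(1/w − w·q), 0), (−i·(1/w − w·q), 0, 1/w + w·q), (0, −(1/w + w·q), 0). -/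
/-!
With `v = w y'` the equation `y'' + (w'/w) y' + q y = 0` becomes the first-order system
`y' = (1/w) v`, `v' = -(w q) y`. The components of `Z₁` are fixed linear combinations of the
products `y_a y_b`, `y_a v_b`, `v_a y_b`, `v_a v_b`, so the product rule expresses `Z₁'` linearly in
`Z₁`; the resulting coefficients are those of `-Ω̂₀`.
-/

open Complex Matrix

/-- `S · Sym²` of the two solution vectors `(y₁, v₁)`, `(y₂, v₂)` of the first-order system. -/
def so3SymSquare (y₁ v₁ y₂ v₂ : ℂ) : Fin 3 → ℂ :=
  ![y₁ * y₂ + v₁ * v₂, I * (y₁ * v₂ + v₁ * y₂), I * (y₁ * y₂ - v₁ * v₂)]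

/-- The matrix induced on `so3SymSquare` by the system `y' = a v`, `v' = -b y`; `Ω̂₀` is the case
`a = 1/w`, `b = w q`. -/
def so3Coeff (a b : ℂ) : Matrix (Fin 3) (Fin 3) ℂ :=
  !![0, I * (a - b), 0; -I * (a - b), 0, a + b; 0, -(a + b), 0]

theorem hasDerivAt_so3SymSquare {y₁ v₁ y₂ v₂ : ℝ → ℂ} {a b : ℂ} {x : ℝ}
    (hy₁ : HasDerivAt y₁ (a * v₁ x) x) (hv₁ : HasDerivAt v₁ (-(b * y₁ x)) x)
    (hy₂ : HasDerivAt y₂ (a * v₂ x) x) (hv₂ : HasDerivAt v₂ (-(b * y₂ x)) x) :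
    HasDerivAt (fun t => so3SymSquare (y₁ t) (v₁ t) (y₂ t) (v₂ t))
      (-(so3Coeff a b *ᵥ so3SymSquare (y₁ x) (v₁ x) (y₂ x) (v₂ x))) x := by
  have h₀ := (hy₁.fun_mul hy₂).fun_add (hv₁.fun_mul hv₂)
  have h₁ := ((hy₁.fun_mul hv₂).fun_add (hv₁.fun_mul hy₂)).const_mul I
  have h₂ := ((hy₁.fun_mul hy₂).fun_sub (hv₁.fun_mul hv₂)).const_mul I
  refine hasDerivAt_pi.2 fun i => ?_
  fin_cases i <;> [refine h₀.congr_deriv ?_; refine h₁.congr_deriv ?_; refine h₂.congr_deriv ?_] <;>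
    simp only [so3Coeff, so3SymSquare, mulVec_cons, mulVec_empty, Pi.add_apply, Pi.neg_apply,
      Pi.smul_apply, Pi.zero_apply, Function.comp_apply, Fin.zero_eta, Fin.mk_one, Fin.reduceFinMk,
      cons_val_zero, cons_val_one, cons_val, head_cons, tail_cons, smul_eq_mul]
  · linear_combination (a - b) * (y₁ x * v₂ x + v₁ x * y₂ x) * I_sq
  · ring
  · ring

theorem hasDerivAt_mul_deriv_of_ode {w q y : ℝ → ℂ} {x : ℝ}
    (hw : DifferentiableAt ℝ w x) (hw0 : w x ≠ 0) (hy' : DifferentiableAt ℝ (deriv y) x)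
    (hode : deriv (deriv y) x + deriv w x / w x * deriv y x + q x * y x = 0) :
    HasDerivAt (fun t => w t * deriv y t) (-(w x * q x * y x)) x := by
  refine (hw.hasDerivAt.fun_mul hy'.hasDerivAt).congr_deriv ?_
  field_simp at hode
  linear_combination hode

theorem so3_second_form_fundamental_matrix_columns_general
    (w q p ya yb : ℝ → ℂ)
    (hw : Differentiable ℝ w) (hw0 : ∀ x, w x ≠ 0)
    (hp : ∀ x, p x = deriv w x / w x)
    (hya : Differentiable ℝ ya) (hya' : Differentiable ℝ (deriv ya))
    (hyb : Differentiable ℝ yb) (hyb' : Differentiable ℝ (deriv yb))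
    (hodea : ∀ x, deriv (deriv ya) x + p x * deriv ya x + q x * ya x = 0)
    (hodeb : ∀ x, deriv (deriv yb) x + p x * deriv yb x + q x * yb x = 0)
    (Z₁ : ℝ → Fin 3 → ℂ) (Ωh₀ : ℝ → Matrix (Fin 3) (Fin 3) ℂ)
    (hZ : ∀ x, Z₁ x = ![ya x * yb x + w x ^ 2 * (deriv ya x * deriv yb x),
        Complex.I * w x * (ya x * deriv yb x + deriv ya x * yb x),
        Complex.I * (ya x * yb x - w x ^ 2 * (deriv ya x * deriv yb x))])
    (hΩ : ∀ x, Ωh₀ x = !![0, Complex.I * (1 / w x - w x * q x), 0;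
        -Complex.I * (1 / w x - w x * q x), 0, 1 / w x + w x * q x;
        0, -(1 / w x + w x * q x), 0]) :
    ∀ x i, deriv (fun t => Z₁ t i) x = -(((Ωh₀ x).mulVec (Z₁ x)) i) := by
  intro x i
  have hsol {y : ℝ → ℂ} (hy : Differentiable ℝ y) (hy' : Differentiable ℝ (deriv y))
      (hode : ∀ x, deriv (deriv y) x + p x * deriv y x + q x * y x = 0) :
      HasDerivAt y (1 / w x * (w x * deriv y x)) x ∧
        HasDerivAt (fun t => w t * deriv y t) (-(w x * q x * y x)) x := by
    refine ⟨?_, hasDerivAt_mul_deriv_of_ode (hw x) (hw0 x) (hy' x) (hp x ▸ hode x)⟩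
    rw [← mul_assoc, one_div_mul_cancel (hw0 x), one_mul]
    exact (hy x).hasDerivAt
  obtain ⟨hya_x, hva_x⟩ := hsol hya hya' hodea
  obtain ⟨hyb_x, hvb_x⟩ := hsol hyb hyb' hodeb
  have hZ_eq : Z₁ = fun t => so3SymSquare (ya t) (w t * deriv ya t) (yb t) (w t * deriv yb t) := by
    funext t
    rw [hZ t]
    ext j
    fin_cases j <;> simp [so3SymSquare] <;> ring
  rw [hZ_eq, hΩ x, (hasDerivAt_pi.1 (hasDerivAt_so3SymSquare hya_x hva_x hyb_x hvb_x) i).deriv]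
  rfl

/-- Columnwise statement that 𝐙₁ = S·Sym²(𝐗₁) is a fundamental matrix of the
second 𝔰𝔬(3,ℂ) form Z₁' = −Ω̂₀·Z₁. -/
theorem so3_second_form_fundamental_matrix_columns
    (w q p ya yb : ℝ → ℂ)
    (hw : Differentiable ℝ w) (hw0 : ∀ x, w x ≠ 0) (hq : Continuous q)
    (hp : ∀ x, p x = deriv w x / w x)
    (hya : Differentiable ℝ ya) (hya' : Differentiable ℝ (deriv ya))
    (hyb : Differentiable ℝ yb) (hyb' : Differentiable ℝ (deriv yb))
    (hodea : ∀ x, deriv (deriv ya) x + p x * deriv ya x + q x * ya x = 0)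
    (hodeb : ∀ x, deriv (deriv yb) x + p x * deriv yb x + q x * yb x = 0)
    (Z₁ : ℝ → Fin 3 → ℂ) (Ωh₀ : ℝ → Matrix (Fin 3) (Fin 3) ℂ)
    (hZ : ∀ x, Z₁ x = ![ya x * yb x + w x ^ 2 * (deriv ya x * deriv yb x),
        Complex.I * w x * (ya x * deriv yb x + deriv ya x * yb x),
        Complex.I * (ya x * yb x - w x ^ 2 * (deriv ya x * deriv yb x))])
    (hΩ : ∀ x, Ωh₀ x = !![0, Complex.I * (1 / w x - w x * q x), 0;
        -Complex.I * (1 / w x - w x * q x), 0, 1 / w x + w x * q x;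
        0, -(1 / w x + w x * q x), 0]) :
    ∀ x i, deriv (fun t => Z₁ t i) x = -(((Ωh₀ x).mulVec (Z₁ x)) i) :=
  so3_second_form_fundamental_matrix_columns_general w q p ya yb hw hw0 hp hya hya' hyb hyb' hodea
    hodeb Z₁ Ωh₀ hZ hΩ
end

section
/- Let ω₁ : ℝ → ℂ be continuous and set ω₂ = 2 − i·ω₁ (the coupled case i·ω₁ + ω₂ = 2). Let y_a, y_b : ℝ → ℂ be twice differentiable solutions of y'' + (1 − i·ω₁)·y = 0. Define γ₁ = y_a·y_b − y_a'·y_b', γ₂ = i·(y_a·y_b + y_a'·y_b'), γ₃ = −(y_a·y_b' + y_a'·y_b). Then (γ₁, γ₂, γ₃) satisfies the Poisson equation of the rigid solid γ' = −A·γ, with A the matrix with rows (0, 0, ω₂), (0, 0, −ω₁), (−ω₂, ω₁, 0); explicitly: γ₁' = −ω₂·γ₃, γ₂' = ω₁·γ₃, γ₃' = ω₂·γ₁ − ω₁·γ₂. -/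
/-- Rigid solid application: in the coupled case iω₁ + ω₂ = 2, the vector
(γ₁,γ₂,γ₃) built from two solutions of y'' + (1 − iω₁)y = 0 satisfies the
Poisson equation γ' = −A·γ. -/
theorem rigid_solid_poisson_solution
    (ω₁ ω₂ ya yb γ₁ γ₂ γ₃ : ℝ → ℂ)
    (hω₁ : Continuous ω₁) (hω₂ : ∀ x, ω₂ x = 2 - Complex.I * ω₁ x)
    (hya : Differentiable ℝ ya) (hya' : Differentiable ℝ (deriv ya))
    (hyb : Differentiable ℝ yb) (hyb' : Differentiable ℝ (deriv yb))
    (hodea : ∀ x, deriv (deriv ya) x + (1 - Complex.I * ω₁ x) * ya x = 0)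
    (hodeb : ∀ x, deriv (deriv yb) x + (1 - Complex.I * ω₁ x) * yb x = 0)
    (hγ₁ : ∀ x, γ₁ x = ya x * yb x - deriv ya x * deriv yb x)
    (hγ₂ : ∀ x, γ₂ x = Complex.I * (ya x * yb x + deriv ya x * deriv yb x))
    (hγ₃ : ∀ x, γ₃ x = -(ya x * deriv yb x + deriv ya x * yb x)) :
    (∀ x, deriv γ₁ x = -(ω₂ x) * γ₃ x) ∧
    (∀ x, deriv γ₂ x = ω₁ x * γ₃ x) ∧
    (∀ x, deriv γ₃ x = ω₂ x * γ₁ x - ω₁ x * γ₂ x) := by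
  have ha2 : ∀ x, deriv (deriv ya) x = -((1 - Complex.I * ω₁ x) * ya x) := fun x => by
    linear_combination hodea x
  have hb2 : ∀ x, deriv (deriv yb) x = -((1 - Complex.I * ω₁ x) * yb x) := fun x => by
    linear_combination hodeb x
  refine ⟨fun x => ?_, fun x => ?_, fun x => ?_⟩ <;>
  · have A : HasDerivAt ya (deriv ya x) x := (hya x).hasDerivAt
    have B : HasDerivAt yb (deriv yb x) x := (hyb x).hasDerivAt
    have A' : HasDerivAt (deriv ya) (-((1 - Complex.I * ω₁ x) * ya x)) x :=
      ha2 x ▸ (hya' x).hasDerivAt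
    have B' : HasDerivAt (deriv yb) (-((1 - Complex.I * ω₁ x) * yb x)) x :=
      hb2 x ▸ (hyb' x).hasDerivAt
    first
    | (rw [show γ₁ = ya * yb - deriv ya * deriv yb from funext hγ₁, ((A.mul B).sub (A'.mul B')).deriv, hγ₃, hω₂]; ring)
    | (rw [show γ₂ = (fun y => Complex.I * (ya * yb + deriv ya * deriv yb) y) from funext hγ₂,
        (((A.mul B).add (A'.mul B')).const_mul Complex.I).deriv, hγ₃]; ring_nf; rw [Complex.I_sq]; ring)
    | (rw [show γ₃ = -(ya * deriv yb + deriv ya * yb) from funext hγ₃,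
        (((A.mul B').add (A'.mul B)).neg).deriv, hγ₁, hγ₂, hω₂]; ring)
end
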